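/- The Maclaurin series of κ₁(u) = (1/π)(u·(π − arccos u) + √(1−u²)) on (-1,1) is 1/π + u/2 + Σ_{n≥1} ((2n-3)!!/((2n-1)·n!·2ⁿ·π)) u^{2n}; in particular all of its Maclaurin coefficients are nonnegative. -/

import Mathlib

/-!
The binomial series gives `1 / √(1 - x²) = ∑ cₘ x²ᵐ` with `cₘ = (1/2)(3/2)⋯(m - 1/2) / m!`,
that is `cₘ = (2m - 1)!! / (2ᵐ m!)`. Since `κ₁' = 1/2 + arcsin / π` and `arcsin' = 1 / √(1 - x²)`,
integrating this series termwise twice gives the Maclaurin series of `κ₁`. Termwise integration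
on `(-1, 1)` rests on differentiating a power series under a geometric bound and on uniqueness of
antiderivatives on an interval. Nonnegativity of the coefficients is inherited from that of
the `cₘ`.
-/

open Real

/-- Maclaurin coefficients of the degree-1 arc-cosine kernel κ₁. -/
noncomputable def k1Coeff : ℕ → ℝ := fun m =>
  if m = 0 then 1 / Real.pi
  else if m = 1 then 1 / 2
  else if m % 2 = 0 then
    (Nat.doubleFactorial (m - 3) : ℝ) /
      ((m - 1 : ℝ) * (Nat.factorial (m / 2)) * 2 ^ (m / 2) * Real.pi)
  else 0

/-- The degree-1 arc-cosine kernel on [-1,1]. -/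
noncomputable def k1Real (u : ℝ) : ℝ :=
  (u * (Real.pi - Real.arccos u) + Real.sqrt (1 - u ^ 2)) / Real.pi

lemma Ring.succ_mul_multichoose_succ {K : Type*} [Field K] [CharZero K] (r : K) (n : ℕ) :
    (n + 1) * Ring.multichoose r (n + 1) = (r + n) * Ring.multichoose r n := by
  have key (m : ℕ) : (m.factorial : K) * Ring.multichoose r m = (ascPochhammer K m).eval r := by
    rw [← nsmul_eq_mul, Ring.factorial_nsmul_multichoose_eq_ascPochhammer,
      Polynomial.ascPochhammer_smeval_eq_eval]
  refine mul_left_cancel₀ (Nat.cast_ne_zero.2 n.factorial_ne_zero) ?_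
  calc (n.factorial : K) * ((n + 1) * Ring.multichoose r (n + 1))
      = (n + 1).factorial * Ring.multichoose r (n + 1) := by push_cast [Nat.factorial_succ]; ring
    _ = (ascPochhammer K n).eval r * (r + n) := by rw [key, ascPochhammer_succ_eval]
    _ = n.factorial * ((r + n) * Ring.multichoose r n) := by rw [← key]; ring

lemma multichoose_half_mem_Icc (m : ℕ) : Ring.multichoose (1 / 2 : ℝ) m ∈ Set.Icc 0 1 := by
  induction m with
  | zero => simp
  | succ m ih =>
    have h := Ring.succ_mul_multichoose_succ (1 / 2 : ℝ) m
    have hm : (0 : ℝ) ≤ m := m.cast_nonneg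
    constructor <;> nlinarith [ih.1, ih.2]

lemma multichoose_half_eq (m : ℕ) :
    Ring.multichoose (1 / 2 : ℝ) m = (Nat.doubleFactorial (2 * m - 1)) / (2 ^ m * m.factorial) := by
  induction m with
  | zero => simp
  | succ m ih =>
    have h := Ring.succ_mul_multichoose_succ (1 / 2 : ℝ) m
    rw [ih] at h
    field_simp at h
    rw [show 2 * (m + 1) - 1 = 2 * m + 1 by omega, Nat.doubleFactorial_add_one, Nat.factorial_succ,
      eq_div_iff (by positivity)]
    push_cast
    linear_combination h

lemma hasSum_multichoose_half_mul_pow {t : ℝ} (ht : |t| < 1) :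
    HasSum (fun m => Ring.multichoose (1 / 2 : ℝ) m * t ^ m) (1 / √(1 - t)) := by
  have h := (Real.one_div_one_sub_rpow_hasFPowerSeriesOnBall_zero (1 / 2)).hasSum
    (y := t) (by simpa [enorm_eq_nnnorm, ← NNReal.coe_lt_one] using ht)
  have hterm (m : ℕ) :
      FormalMultilinearSeries.ofScalars ℝ (fun n => Ring.choose (1 / 2 + n - 1 : ℝ) n) m
        (fun _ => t) = Ring.multichoose (1 / 2 : ℝ) m * t ^ m := by
    rw [FormalMultilinearSeries.ofScalars_apply_eq, Ring.multichoose_eq, smul_eq_mul]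
  rwa [funext hterm, zero_add, ← Real.sqrt_eq_rpow] at h

section TermwiseIntegration

variable {a : ℕ → ℝ} {C : ℝ}

lemma summable_coeff_succ_mul_pow_succ (ha : ∀ n, |(n + 1) * a (n + 1)| ≤ C) {x : ℝ}
    (hx : |x| < 1) : Summable fun n => a (n + 1) * x ^ (n + 1) := by
  refine .of_norm_bounded ((summable_geometric_of_lt_one (abs_nonneg x) hx).mul_left C) fun n => ?_
  have hcoeff : |a (n + 1)| ≤ C := by
    refine le_trans ?_ (ha n)
    rw [abs_mul]
    exact le_mul_of_one_le_left (abs_nonneg _) (by rw [abs_of_nonneg (by positivity)]; simp)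
  have hpow : |x| ^ (n + 1) ≤ |x| ^ n := pow_le_pow_of_le_one (abs_nonneg x) hx.le n.le_succ
  rw [norm_mul, norm_pow, Real.norm_eq_abs, Real.norm_eq_abs]
  exact mul_le_mul hcoeff hpow (by positivity) ((abs_nonneg _).trans hcoeff)

lemma hasDerivAt_tsum_coeff_succ_mul_pow_succ (ha : ∀ n, |(n + 1) * a (n + 1)| ≤ C) {x : ℝ}
    (hx : |x| < 1) :
    HasDerivAt (fun y => ∑' n, a (n + 1) * y ^ (n + 1)) (∑' n, (n + 1) * a (n + 1) * x ^ n) x := by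
  obtain ⟨r, hxr, hr1⟩ := exists_between hx
  have hr0 : 0 < r := (abs_nonneg x).trans_lt hxr
  have hC : 0 ≤ C := (abs_nonneg _).trans (ha 0)
  have hderiv (n : ℕ) (y : ℝ) :
      HasDerivAt (fun y => a (n + 1) * y ^ (n + 1)) ((n + 1) * a (n + 1) * y ^ n) y := by
    refine ((hasDerivAt_pow (n + 1) y).const_mul (a (n + 1))).congr_deriv ?_
    rw [Nat.add_sub_cancel]
    push_cast
    ring
  refine hasDerivAt_tsum_of_isPreconnected ((summable_geometric_of_lt_one hr0.le hr1).mul_left C)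
    isOpen_Ioo isPreconnected_Ioo (fun n y _ => hderiv n y) (fun n y hy => ?_)
    (y₀ := 0) ⟨by linarith, by linarith⟩ (by simp) (abs_lt.1 hxr)
  rw [norm_mul, norm_pow, Real.norm_eq_abs, Real.norm_eq_abs]
  exact mul_le_mul (ha n) (pow_le_pow_left₀ (abs_nonneg y) (abs_lt.2 hy).le n) (by positivity) hC

theorem hasSum_coeff_mul_pow_of_hasDerivAt {f f' : ℝ → ℝ} (ha : ∀ n, |(n + 1) * a (n + 1)| ≤ C)
    (hf : ∀ x ∈ Set.Ioo (-1 : ℝ) 1, HasDerivAt f (f' x) x)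
    (hf' : ∀ x ∈ Set.Ioo (-1 : ℝ) 1, HasSum (fun n => (n + 1) * a (n + 1) * x ^ n) (f' x))
    (h0 : f 0 = a 0) {x : ℝ} (hx : x ∈ Set.Ioo (-1 : ℝ) 1) :
    HasSum (fun n => a n * x ^ n) (f x) := by
  set g := fun y => a 0 + ∑' n, a (n + 1) * y ^ (n + 1)
  have hg (y : ℝ) (hy : y ∈ Set.Ioo (-1 : ℝ) 1) : HasDerivAt g (f' y) y := by
    have := (hasDerivAt_tsum_coeff_succ_mul_pow_succ ha (abs_lt.2 hy)).const_add (a 0)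
    rwa [(hf' y hy).tsum_eq] at this
  have hfg : Set.EqOn f g (Set.Ioo (-1) 1) :=
    isOpen_Ioo.eqOn_of_deriv_eq isPreconnected_Ioo
      (fun y hy => (hf y hy).differentiableAt.differentiableWithinAt)
      (fun y hy => (hg y hy).differentiableAt.differentiableWithinAt)
      (fun y hy => by rw [(hf y hy).deriv, (hg y hy).deriv]) (x := 0) ⟨by norm_num, by norm_num⟩
      (by simp [g, h0])
  refine (hasSum_nat_add_iff' 1).1 ?_
  rw [hfg hx, Finset.sum_range_one, pow_zero, mul_one, add_sub_cancel_left]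
  exact (summable_coeff_succ_mul_pow_succ ha (abs_lt.2 hx)).hasSum

end TermwiseIntegration

noncomputable def arcsinCoeff (n : ℕ) : ℝ :=
  if Even n then 0 else Ring.multichoose (1 / 2 : ℝ) (n / 2) / n

lemma arcsinCoeff_mem_Icc (n : ℕ) : arcsinCoeff n ∈ Set.Icc 0 1 := by
  unfold arcsinCoeff
  split_ifs with hn
  · simp
  · obtain ⟨h0, h1⟩ := multichoose_half_mem_Icc (n / 2)
    have hn1 : (1 : ℝ) ≤ n := by exact_mod_cast Nat.one_le_iff_ne_zero.2 (by rintro rfl; simp at hn)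
    exact ⟨by positivity, (div_le_self h0 hn1).trans h1⟩

lemma succ_mul_arcsinCoeff_succ (n : ℕ) :
    (n + 1) * arcsinCoeff (n + 1) = if Even n then Ring.multichoose (1 / 2 : ℝ) (n / 2) else 0 := by
  rcases Nat.even_or_odd' n with ⟨m, rfl | rfl⟩
  · rw [arcsinCoeff, if_neg (Nat.not_even_bit1 m), if_pos (even_two_mul m),
      show (2 * m + 1) / 2 = m by omega, Nat.mul_div_cancel_left m two_pos]
    push_cast
    field_simp
  · rw [arcsinCoeff, if_pos ⟨m + 1, by ring⟩, if_neg (Nat.not_even_bit1 m), mul_zero]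

lemma hasSum_succ_mul_arcsinCoeff_succ {x : ℝ} (hx : x ∈ Set.Ioo (-1 : ℝ) 1) :
    HasSum (fun n => (n + 1) * arcsinCoeff (n + 1) * x ^ n) (1 / √(1 - x ^ 2)) := by
  have hx2 : |x ^ 2| < 1 := by
    rw [abs_pow]; exact pow_lt_one₀ (abs_nonneg x) (abs_lt.2 hx) two_ne_zero
  rw [← add_zero (1 / √(1 - x ^ 2))]
  refine HasSum.even_add_odd ?_ ?_
  · simp_rw [succ_mul_arcsinCoeff_succ, if_pos (even_two_mul _), Nat.mul_div_cancel_left _ two_pos,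
      pow_mul]
    exact hasSum_multichoose_half_mul_pow hx2
  · simp_rw [succ_mul_arcsinCoeff_succ, Nat.not_even_bit1, if_false, zero_mul]
    exact hasSum_zero

lemma hasSum_arcsin {x : ℝ} (hx : x ∈ Set.Ioo (-1 : ℝ) 1) :
    HasSum (fun n => arcsinCoeff n * x ^ n) (arcsin x) := by
  refine hasSum_coeff_mul_pow_of_hasDerivAt (C := 1) (fun n => ?_)
    (fun y hy => hasDerivAt_arcsin hy.1.ne' hy.2.ne)
    (fun y hy => hasSum_succ_mul_arcsinCoeff_succ hy)
    (by simp [arcsinCoeff]) hx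
  rw [succ_mul_arcsinCoeff_succ]
  split_ifs
  · obtain ⟨h0, h1⟩ := multichoose_half_mem_Icc (n / 2)
    rwa [abs_of_nonneg h0]
  · simp

lemma succ_mul_k1Coeff_succ (n : ℕ) :
    (n + 1) * k1Coeff (n + 1) = (if n = 0 then 1 / 2 else 0) + arcsinCoeff n / π := by
  rcases Nat.even_or_odd' n with ⟨m, rfl | rfl⟩
  · rcases Nat.eq_zero_or_pos m with rfl | hm
    · simp [k1Coeff, arcsinCoeff]
    · have hodd : (2 * m + 1) % 2 = 1 := by omega
      simp [k1Coeff, arcsinCoeff, hodd, hm.ne']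
  · have hodd : ¬Even (2 * m + 1) := Nat.not_even_bit1 m
    have hdiv : (2 * m + 1) / 2 = m := by omega
    have hsub : 2 * m + 1 + 1 - 3 = 2 * m - 1 := by omega
    have hhalf : (2 * m + 1 + 1) / 2 = m + 1 := by omega
    have hcast : ((2 * m + 1 + 1 : ℕ) : ℝ) - 1 = 2 * m + 1 := by push_cast; ring
    rw [k1Coeff, if_neg (by omega), if_neg (by omega), if_pos (by omega), hsub, hhalf,
      arcsinCoeff, if_neg hodd, hdiv, multichoose_half_eq, Nat.factorial_succ, hcast,
      if_neg (by omega), zero_add]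
    push_cast
    field_simp
    ring

lemma hasDerivAt_k1Real {u : ℝ} (hu : u ∈ Set.Ioo (-1 : ℝ) 1) :
    HasDerivAt k1Real (1 / 2 + arcsin u / π) u := by
  have hsq : 0 < 1 - u ^ 2 := by nlinarith [hu.1, hu.2]
  have h := (((hasDerivAt_id' u).mul ((hasDerivAt_arccos hu.1.ne' hu.2.ne).const_sub π)).add
    (((hasDerivAt_pow 2 u).const_sub 1).sqrt hsq.ne')).div_const π
  refine h.congr_deriv ?_
  rw [arccos_eq_pi_div_two_sub_arcsin]
  field_simp
  ring

lemma hasSum_k1Real {u : ℝ} (hu : u ∈ Set.Ioo (-1 : ℝ) 1) :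
    HasSum (fun n => k1Coeff n * u ^ n) (k1Real u) := by
  refine hasSum_coeff_mul_pow_of_hasDerivAt (C := 2) (fun n => ?_)
    (fun x hx => hasDerivAt_k1Real hx) (fun x hx => ?_) (by simp [k1Real, k1Coeff]) hu
  · obtain ⟨h0, h1⟩ := arcsinCoeff_mem_Icc n
    have hπ : arcsinCoeff n / π ≤ 1 :=
      div_le_one_of_le₀ (h1.trans (by linarith [pi_gt_three])) pi_pos.le
    rw [succ_mul_k1Coeff_succ, abs_le]
    split_ifs <;> constructor <;> linarith [div_nonneg h0 pi_pos.le]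
  · simp_rw [succ_mul_k1Coeff_succ, add_mul, div_mul_eq_mul_div]
    refine HasSum.add ?_ ((hasSum_arcsin hx).div_const π)
    convert hasSum_ite_eq 0 (1 / 2 : ℝ) using 2 with n
    split_ifs <;> simp_all

lemma k1Coeff_nonneg (n : ℕ) : 0 ≤ k1Coeff n := by
  cases n with
  | zero => simp [k1Coeff, pi_pos.le]
  | succ n =>
    have h := succ_mul_k1Coeff_succ n
    have hsum : 0 ≤ (if n = 0 then 1 / 2 else 0) + arcsinCoeff n / π := by
      have := div_nonneg (arcsinCoeff_mem_Icc n).1 pi_pos.le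
      split_ifs <;> linarith
    exact nonneg_of_mul_nonneg_right (h ▸ hsum) (by positivity)

theorem k1_maclaurin_series :
    (∀ u ∈ Set.Ioo (-1 : ℝ) 1, k1Real u = ∑' n : ℕ, k1Coeff n * u ^ n) ∧
    (∀ n : ℕ, 0 ≤ k1Coeff n) :=
  ⟨fun _ hu => (hasSum_k1Real hu).tsum_eq.symm, k1Coeff_nonneg⟩
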